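/- Fix N ≥ 2 and a finite connected simple graph G. If c(G) > N−1, then there exists a noncapture state s of the CR-pregame Γ̆_N(G) with c(G|s) = ∞; conversely, if some noncapture state s has c(G|s) = ∞, then c(G) > N−1. -/

import Mathlib

open scoped Classical

/-- A state of the CR-pregame `Γ̆_N(G)` with `c` cop tokens and one robber token:
the positions of the cops, the position of the robber, and whose turn it is
(turn `Fin.last c` is the robber's turn, turn `i < c` is cop `Cᵢ`'s turn). -/
structure PGState (V : Type) (c : ℕ) where
  cop : Fin c → V
  rob : V
  turn : Fin (c + 1)

namespace PGState

variable {V : Type} [Fintype V] [DecidableEq V] {c : ℕ}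

/-- No cop occupies the robber's vertex. -/
def NonCapture (s : PGState V c) : Prop := ∀ i : Fin c, s.cop i ≠ s.rob

/-- Some cop occupies the robber's vertex. -/
def Capture (s : PGState V c) : Prop := ∃ i : Fin c, s.cop i = s.rob

/-- A legal single-token move: stay in place or move along an edge of `G`. -/
def adjStay (G : SimpleGraph V) (u v : V) : Prop := u = v ∨ G.Adj u v

/-- One turn of the pregame: the token whose turn it is makes a legal move, all other
tokens stay put, and the turn passes cyclically along `C₁, ..., C_c, R, C₁, ...`. -/
def Step (G : SimpleGraph V) (s s' : PGState V c) : Prop :=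
  s'.turn = s.turn + 1 ∧
  (if h : (s.turn : ℕ) < c then
      adjStay G (s.cop ⟨(s.turn : ℕ), h⟩) (s'.cop ⟨(s.turn : ℕ), h⟩) ∧ s'.rob = s.rob ∧
        ∀ j : Fin c, j ≠ ⟨(s.turn : ℕ), h⟩ → s'.cop j = s.cop j
    else adjStay G s.rob s'.rob ∧ ∀ j : Fin c, s'.cop j = s.cop j)

/-- An infinite play of the pregame starting from state `s`. -/
def IsPlay (G : SimpleGraph V) (s : PGState V c) (f : ℕ → PGState V c) : Prop :=
  f 0 = s ∧ ∀ t, Step G (f t) (f (t + 1))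

/-- The history of a play up to (and including) time `t`. -/
def hist (f : ℕ → PGState V c) (t : ℕ) : List (PGState V c) :=
  (List.range (t + 1)).map f

/-- The play `f` is consistent with the (history-dependent) strategies `σ` of the cops
in the set `A`: whenever it is the turn of a cop in `A`, his move is the one
prescribed by his strategy applied to the current history. -/
def Consistent (A : Finset (Fin c)) (σ : Fin c → List (PGState V c) → V)
    (f : ℕ → PGState V c) : Prop :=
  ∀ t, ∀ h : ((f t).turn : ℕ) < c, (⟨((f t).turn : ℕ), h⟩ : Fin c) ∈ A →
    (f (t + 1)).cop ⟨((f t).turn : ℕ), h⟩ = σ ⟨((f t).turn : ℕ), h⟩ (hist f t)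

/-- `σ` is an `s`-guaranteed capture profile for the cops in `A`: every play from `s`
consistent with `σ` reaches a capture state, no matter how the remaining tokens
(including the robber) play. -/
def IsGCP (G : SimpleGraph V) (A : Finset (Fin c))
    (σ : Fin c → List (PGState V c) → V) (s : PGState V c) : Prop :=
  ∀ f : ℕ → PGState V c, IsPlay G s f → Consistent A σ f → ∃ t, Capture (f t)

/-- The state cop number `c(G|s)`: the minimum cardinality of a nonempty set of cops
admitting an `s`-guaranteed capture profile; `⊤` (i.e. `∞`) if there is none. -/
noncomputable def stateCopNum (G : SimpleGraph V) (s : PGState V c) : ℕ∞ :=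
  sInf ((fun A : Finset (Fin c) => (A.card : ℕ∞)) ''
    {A | A.Nonempty ∧ ∃ σ, IsGCP G A σ s})

/-- The classic cop number `c(G)` (in the turn-based pregame formulation of the paper):
the minimum number `k` of cops which guarantee capture from every noncapture state. -/
noncomputable def copNumber (G : SimpleGraph V) : ℕ∞ :=
  sInf ((fun k : ℕ => (k : ℕ∞)) ''
    {k | ∀ s : PGState V k, NonCapture s → ∃ σ, IsGCP G Finset.univ σ s})

/-- Cop `C_m`, using strategy `σ`, himself effects the capture starting from `s`, no
matter how all the remaining tokens play. -/
def ForcesCapBy (G : SimpleGraph V) (m : Fin c)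
    (σ : List (PGState V c) → V) (s : PGState V c) : Prop :=
  ∀ f : ℕ → PGState V c, IsPlay G s f → Consistent {m} (fun _ => σ) f →
    ∃ t, (f t).cop m = (f t).rob

end PGState

/-! If `n` cops cannot win from some noncapture state `s`, then no set of cops of the pregame
wins from `s` either, since a capture profile for some of the cops is one for all of them.
Conversely, suppose `k ≤ n` cops win the classic game. The first `k` cops of the pregame
play their winning strategy against the state restricted to themselves and the robber: this
restricted state does not change while the other cops move, so reading it off at the turns
of the first `k` cops and of the robber gives a play of the `k`-cop game. Since zero cops
never capture, `k ≥ 1`, and `c(G|s) ≤ k` is finite. -/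

theorem Nat.filter_range_eq_map_nth (p : ℕ → Prop) [DecidablePred p] (n : ℕ) :
    (List.range n).filter (fun t => decide (p t)) =
      (List.range (Nat.count p n)).map (Nat.nth p) := by
  induction n with
  | zero => simp
  | succ n ih =>
    by_cases hn : p n <;> simp [List.range_succ, Nat.count_succ, hn, ih]

namespace PGState

variable {V : Type} {G : SimpleGraph V} {c k : ℕ}

theorem IsGCP.mono {A B : Finset (Fin c)} {σ : Fin c → List (PGState V c) → V}
    {s : PGState V c} (h : IsGCP G A σ s) (hAB : A ⊆ B) : IsGCP G B σ s :=
  fun f hf hcons => h f hf fun t ht hmem => hcons t ht (hAB hmem)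

theorem stateCopNum_eq_top_iff {s : PGState V c} :
    stateCopNum G s = ⊤ ↔ ∀ A : Finset (Fin c), A.Nonempty → ∀ σ, ¬ IsGCP G A σ s := by
  rw [stateCopNum, sInf_eq_top, Set.forall_mem_image]
  simp

theorem exists_forall_not_isGCP_of_lt_copNumber {n : ℕ} (h : (n : ℕ∞) < copNumber G) :
    ∃ s : PGState V n, s.NonCapture ∧ ∀ σ, ¬ IsGCP G Finset.univ σ s := by
  by_contra! hn
  exact h.not_ge (sInf_le ⟨n, hn, rfl⟩)

theorem lt_copNumber_of_forall_le {n : ℕ}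
    (h : ∀ k ≤ n, ∃ s : PGState V k, s.NonCapture ∧ ∀ σ, ¬ IsGCP G Finset.univ σ s) :
    (n : ℕ∞) < copNumber G := by
  refine (Nat.cast_lt.mpr n.lt_succ_self).trans_le (le_sInf ?_)
  rintro _ ⟨k, hk, rfl⟩
  by_contra! hkn
  obtain ⟨s, hs, hσ⟩ := h k (Nat.lt_succ_iff.mp (Nat.cast_lt.mp hkn))
  obtain ⟨σ, hGCP⟩ := hk s hs
  exact hσ σ hGCP

theorem not_isGCP_of_zero (σ : Fin 0 → List (PGState V 0) → V) (s : PGState V 0) :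
    ¬ IsGCP G Finset.univ σ s := by
  intro h
  have hplay : IsPlay G s fun _ => s :=
    ⟨rfl, fun _ => ⟨Subsingleton.elim (α := Fin 1) _ _, by simp [adjStay]⟩⟩
  obtain ⟨_, i, _⟩ := h _ hplay fun _ h => absurd h (Nat.not_lt_zero _)
  exact i.elim0

/-- The first `k` cops and the robber; the turn of every other cop is read as the robber's. -/
@[simps]
def restrict (hkc : k ≤ c) (s : PGState V c) : PGState V k where
  cop i := s.cop (Fin.castLE hkc i)
  rob := s.rob
  turn := ⟨min s.turn k, by omega⟩

def MoverKept (k : ℕ) (s : PGState V c) : Prop :=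
  (s.turn : ℕ) < k ∨ (s.turn : ℕ) = c

theorem NonCapture.restrict {s : PGState V c} (hs : s.NonCapture) (hkc : k ≤ c) :
    (s.restrict hkc).NonCapture :=
  fun i => hs (Fin.castLE hkc i)

theorem Step.turn_val_of_lt {s s' : PGState V c} (h : Step G s s') (ht : (s.turn : ℕ) < c) :
    (s'.turn : ℕ) = s.turn + 1 := by
  rw [h.1, Fin.val_add_one_of_lt (by simpa [Fin.lt_def] using ht)]

theorem Step.turn_val_of_eq {s s' : PGState V c} (h : Step G s s') (ht : (s.turn : ℕ) = c) :
    (s'.turn : ℕ) = 0 := by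
  rw [h.1, show s.turn = Fin.last c from Fin.ext ht, Fin.last_add_one, Fin.val_zero]

theorem Step.restrict_eq {s s' : PGState V c} (h : Step G s s') (hkc : k ≤ c)
    (hm : ¬ s.MoverKept k) : s'.restrict hkc = s.restrict hkc := by
  simp only [MoverKept, not_or, not_lt] at hm
  have ht : (s.turn : ℕ) < c := lt_of_le_of_ne (Nat.lt_succ_iff.mp s.turn.isLt) hm.2
  have hturn := h.turn_val_of_lt ht
  obtain ⟨_, hrob, hcop⟩ := (dif_pos ht).mp h.2
  simp only [PGState.restrict, PGState.mk.injEq, Fin.mk.injEq]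
  refine ⟨funext fun i => hcop _ fun he => ?_, hrob, by omega⟩
  have := congrArg Fin.val he
  simp only [Fin.val_castLE] at this
  omega

theorem Step.restrict {s s' : PGState V c} (h : Step G s s') (hkc : k ≤ c)
    (hm : s.MoverKept k) : Step G (s.restrict hkc) (s'.restrict hkc) := by
  rcases hm with ht | ht
  · have htc : (s.turn : ℕ) < c := ht.trans_le hkc
    have hturn := h.turn_val_of_lt htc
    obtain ⟨hmove, hrob, hcop⟩ := (dif_pos htc).mp h.2
    refine ⟨Fin.ext ?_, ?_⟩
    · rw [Fin.val_add_one_of_lt (by simp [Fin.lt_def]; omega)]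
      simp only [restrict_turn_val]
      omega
    · rw [dif_pos (by simp; omega)]
      refine ⟨?_, hrob, fun j hj => hcop _ fun he => hj (Fin.ext ?_)⟩
      · have hidx : ∀ hlt, Fin.castLE hkc ⟨((s.restrict hkc).turn : ℕ), hlt⟩
            = (⟨s.turn, htc⟩ : Fin c) := fun _ => Fin.ext (by simp; omega)
        simpa only [restrict_cop, hidx] using hmove
      · have := congrArg Fin.val he
        simp only [Fin.val_castLE, restrict_turn_val] at this ⊢
        omega
  · have hturn := h.turn_val_of_eq ht
    obtain ⟨hmove, hcop⟩ := (dif_neg ht.not_lt).mp h.2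
    refine ⟨Fin.ext ?_, ?_⟩
    · have hlast : (s.restrict hkc).turn = Fin.last k := Fin.ext (by simp; omega)
      simp [hlast, hturn]
    · rw [dif_neg (by simp; omega)]
      exact ⟨hmove, fun j => hcop _⟩

section Play

variable {f : ℕ → PGState V c}

theorem exists_ge_turn_val_eq (hf : ∀ t, Step G (f t) (f (t + 1))) (t : ℕ) :
    ∃ u ≥ t, ((f u).turn : ℕ) = c := by
  induction h : c - ((f t).turn : ℕ) generalizing t with
  | zero => exact ⟨t, le_rfl, by have := (f t).turn.isLt; omega⟩
  | succ d ih =>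
    have ht : ((f t).turn : ℕ) < c := by omega
    obtain ⟨u, hu, hu'⟩ := ih (t + 1) (by rw [(hf t).turn_val_of_lt ht]; omega)
    exact ⟨u, by omega, hu'⟩

theorem infinite_moverKept (hf : ∀ t, Step G (f t) (f (t + 1))) :
    {t | (f t).MoverKept k}.Infinite :=
  Nat.frequently_atTop_iff_infinite.mp <| Filter.frequently_atTop.mpr fun t =>
    (exists_ge_turn_val_eq hf t).imp fun _ ⟨hu, hc⟩ => ⟨hu, Or.inr hc⟩

theorem restrict_eq_of_forall_not_moverKept (hf : ∀ t, Step G (f t) (f (t + 1))) (hkc : k ≤ c)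
    {a b : ℕ} (hab : a ≤ b) (h : ∀ t, a ≤ t → t < b → ¬ (f t).MoverKept k) :
    (f b).restrict hkc = (f a).restrict hkc := by
  induction b, hab using Nat.le_induction with
  | base => rfl
  | succ b hab ih =>
    rw [(hf b).restrict_eq hkc (h b hab b.lt_succ_self), ih fun t ht htb => h t ht (by omega)]

noncomputable def restrictPlay (hkc : k ≤ c) (f : ℕ → PGState V c) (n : ℕ) : PGState V k :=
  (f (Nat.nth (fun t => (f t).MoverKept k) n)).restrict hkc

theorem restrictPlay_succ (hf : ∀ t, Step G (f t) (f (t + 1))) {hkc : k ≤ c} (n : ℕ) :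
    restrictPlay hkc f (n + 1) = (f (Nat.nth (fun t => (f t).MoverKept k) n + 1)).restrict hkc :=
  restrict_eq_of_forall_not_moverKept hf hkc
    (Nat.nth_strictMono (infinite_moverKept hf) n.lt_succ_self)
    fun _ ht ht' hkept => (Nat.le_nth_of_lt_nth_succ ht' hkept).not_gt ht

theorem hist_restrictPlay (hf : ∀ t, Step G (f t) (f (t + 1))) (hkc : k ≤ c) (n : ℕ) :
    hist (restrictPlay hkc f) n =
      ((hist f (Nat.nth (fun t => (f t).MoverKept k) n)).filter
        fun s => decide (s.MoverKept k)).map (restrict hkc) := by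
  rw [hist, hist, List.filter_map, Function.comp_def, Nat.filter_range_eq_map_nth,
    Nat.count_nth_succ_of_infinite (infinite_moverKept hf), List.map_map, List.map_map]
  rfl

theorem isPlay_restrictPlay {s : PGState V c} (hf : IsPlay G s f) (hkc : k ≤ c) :
    IsPlay G (s.restrict hkc) (restrictPlay hkc f) := by
  obtain ⟨rfl, hstep⟩ := hf
  have hinf := infinite_moverKept (k := k) hstep
  refine ⟨restrict_eq_of_forall_not_moverKept hstep hkc (Nat.zero_le _) fun t _ ht hkept => ?_,
    fun n => ?_⟩
  · exact ht.not_ge (Nat.nth_count (p := fun t => (f t).MoverKept k) hkept ▸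
      Nat.nth_monotone hinf (Nat.zero_le _))
  · rw [restrictPlay_succ hstep]
    exact (hstep _).restrict hkc (Nat.nth_mem_of_infinite hinf n)

end Play

theorem exists_isGCP_of_isGCP_restrict (hkc : k ≤ c) {s : PGState V c}
    {τ : Fin k → List (PGState V k) → V} (hτ : IsGCP G Finset.univ τ (s.restrict hkc)) :
    ∃ σ, IsGCP G (Finset.univ.filter fun j : Fin c => (j : ℕ) < k) σ s := by
  refine ⟨fun j L => if hj : (j : ℕ) < k then
    τ ⟨j, hj⟩ ((L.filter fun s => decide (s.MoverKept k)).map (restrict hkc)) else s.rob, ?_⟩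
  intro f hf hcons
  have hconsk : Consistent Finset.univ τ (restrictPlay hkc f) := by
    intro n hn _
    rw [restrictPlay_succ hf.2, restrict_cop, hist_restrictPlay hf.2]
    have hturn : ((restrictPlay hkc f n).turn : ℕ)
        = (f (Nat.nth (fun t => (f t).MoverKept k) n)).turn := by
      simp only [restrictPlay, restrict_turn_val] at hn ⊢
      omega
    generalize ((restrictPlay hkc f n).turn : ℕ) = m at hn hturn ⊢
    subst hturn
    simpa only [dif_pos hn, Fin.castLE_mk] using hcons _ (hn.trans_le hkc) (by simpa using hn)
  obtain ⟨n, i, hi⟩ := hτ _ (isPlay_restrictPlay hf hkc) hconsk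
  exact ⟨_, Fin.castLE hkc i, hi⟩

end PGState

theorem stmt8_general {V : Type} (G : SimpleGraph V)
    (N : ℕ) :
    ((N - 1 : ℕ) : ℕ∞) < PGState.copNumber G ↔
      ∃ s : PGState V (N - 1), s.NonCapture ∧ PGState.stateCopNum G s = ⊤ := by
  open PGState in
  constructor
  · intro hlt
    obtain ⟨s, hs, hσ⟩ := exists_forall_not_isGCP_of_lt_copNumber hlt
    exact ⟨s, hs, stateCopNum_eq_top_iff.mpr fun A _ σ hA => hσ σ (hA.mono A.subset_univ)⟩
  · rintro ⟨s, hs, htop⟩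
    refine lt_copNumber_of_forall_le fun k hkN => ?_
    rcases k.eq_zero_or_pos with rfl | hk
    · exact ⟨⟨Fin.elim0, s.rob, 0⟩, fun i => i.elim0, fun σ => not_isGCP_of_zero σ _⟩
    · refine ⟨s.restrict hkN, hs.restrict hkN, fun τ hτ => ?_⟩
      obtain ⟨σ, hσ⟩ := exists_isGCP_of_isGCP_restrict hkN hτ
      exact stateCopNum_eq_top_iff.mp htop _ ⟨⟨0, by omega⟩, by simp [hk]⟩ σ hσ

/-- `c(G) > N−1` iff there exists a noncapture state `s` of the pregame `Γ̆_N(G)` (with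
`N−1` cop tokens) whose state cop number is infinite. -/
theorem stmt8 {V : Type} [Fintype V] [DecidableEq V] (G : SimpleGraph V)
    (N : ℕ) (hN : 2 ≤ N) (hconn : G.Connected) :
    ((N - 1 : ℕ) : ℕ∞) < PGState.copNumber G ↔
      ∃ s : PGState V (N - 1), s.NonCapture ∧ PGState.stateCopNum G s = ⊤ :=
  stmt8_general G N
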